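/- If a PEPA component P satisfies PSNI, then for every action type α ∈ ℒ∪{τ} and every rate r, the prefixed component (α,r).P satisfies PSNI. -/

import Mathlib

open scoped ENNReal Classical

/-- Action types: a countable set with a distinguished silent type `tau`. -/
inductive Act : Type where
  | tau : Act
  | vis : ℕ → Act
deriving DecidableEq

/-- PEPA components: prefix `(α,r).P`, choice `P+Q`, cooperation `P ⊲⊳_L Q`,
hiding `P/L`, and constants `A` (given by an environment of defining equations).
Rates live in `ℝ≥0∞` (positive reals together with the unspecified symbol `⊤`). -/
inductive Proc : Type where
  | pre : Act → ℝ≥0∞ → Proc → Proc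
  | choice : Proc → Proc → Proc
  | coop : Proc → Set Act → Proc → Proc
  | hide : Proc → Set Act → Proc
  | const : ℕ → Proc

namespace PEPA

/-- Fuelled conditional transition rate `qF E n P α P'`: the total rate
(with multiplicities) of the `α`-transitions from `P` to `P'` in the
multi-transition system given by the operational semantics of Table 1,
computed with `n` units of fuel for unfolding constants.
The shared-activity (cooperation) rule uses the apparent rates
`r_α(P) = ∑' X, qF E n P α X` as in
`R = (r₁/r_α(P)) · (r₂/r_α(Q)) · min(r_α(P), r_α(Q))`. -/
noncomputable def qF (E : ℕ → Proc) : ℕ → Proc → Act → Proc → ℝ≥0∞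
  | 0, _, _, _ => 0
  | n+1, .pre β r P, α, X => if β = α ∧ X = P then r else 0
  | n+1, .choice P Q, α, X => qF E n P α X + qF E n Q α X
  | n+1, .hide P L, α, X =>
      match X with
      | .hide P' L' =>
          if L' = L then
            if α = .tau then qF E n P .tau P' + ∑' β : L, qF E n P β P'
            else if α ∈ L then 0 else qF E n P α P'
          else 0
      | _ => 0
  | n+1, .coop P L Q, α, X =>
      match X with
      | .coop P' L' Q' =>
          if L' = L then
            if α ∈ L then
              (qF E n P α P' / ∑' Y, qF E n P α Y) * (qF E n Q α Q' / ∑' Y, qF E n Q α Y)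
                * min (∑' Y, qF E n P α Y) (∑' Y, qF E n Q α Y)
            else
              (if Q' = Q then qF E n P α P' else 0) + (if P' = P then qF E n Q α Q' else 0)
          else 0
      | _ => 0
  | n+1, .const c, α, X => qF E n (E c) α X

/-- `q E P α P'` : the (total) conditional transition rate from `P` to `P'`
via action type `α`, i.e. the sum of the rates over all transitions
`P --(α,r)--> P'` of the multi-transition system. -/
noncomputable def q (E : ℕ → Proc) (P : Proc) (α : Act) (P' : Proc) : ℝ≥0∞ :=
  ⨆ n, qF E n P α P'

/-- Total conditional transition rate `q[P,S,α] = Σ_{P'∈S} q(P,P',α)`. -/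
noncomputable def qTo (E : ℕ → Proc) (P : Proc) (S : Set Proc) (α : Act) : ℝ≥0∞ :=
  ∑' P' : S, q E P α P'

/-- One step of the derivation graph: `P` has some transition to `P'`. -/
def Step (E : ℕ → Proc) (P P' : Proc) : Prop := ∃ α, q E P α P' ≠ 0

/-- The derivative set `ds(P)`: the set of states reachable from `P`. -/
def ds (E : ℕ → Proc) (P : Proc) : Set Proc :=
  {P' | Relation.ReflTransGen (Step E) P P'}

/-- `𝒜(P)`: the set of current action types of `P`. -/
def curTypes (E : ℕ → Proc) (P : Proc) : Set Act :=
  {α | ∃ P', q E P α P' ≠ 0}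

/-- The set of equivalence classes `𝒞/ℛ` of a relation `ℛ`. -/
def eqCls (R : Proc → Proc → Prop) : Set (Set Proc) :=
  {S | ∃ P, S = {Q | R P Q}}

/-- A lumpable bisimulation: an equivalence relation `R` such that whenever
`R P Q`, then for all `α` and all classes `S` of `R` with either `α ≠ τ`, or
`α = τ` and `P,Q ∉ S`, it holds that `q[P,S,α] = q[Q,S,α]`. -/
def IsLumpBisim (E : ℕ → Proc) (R : Proc → Proc → Prop) : Prop :=
  Equivalence R ∧
    ∀ P Q, R P Q → ∀ α, ∀ S ∈ eqCls R,
      (α ≠ Act.tau ∨ (P ∉ S ∧ Q ∉ S)) → qTo E P S α = qTo E Q S α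

/-- Lumpable bisimilarity `≈_l`: the union of all lumpable bisimulations. -/
def lb (E : ℕ → Proc) (P Q : Proc) : Prop :=
  ∃ R, IsLumpBisim E R ∧ R P Q

section High

-- `Hs` is the set `ℋ` of high action types (the remaining visible types are low).
variable (E : ℕ → Proc) (Hs : Set Act)

/-- A high level component: every derivative may next engage in high types only. -/
def IsHighComp (Hc : Proc) : Prop := ∀ H' ∈ ds E Hc, curTypes E H' ⊆ Hs

/-- The set `ℒ` of low action types. -/
def Low : Set Act := {α | α ∉ Hs ∧ α ≠ Act.tau}

/-- An inert component: a high level component performing no activity at all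
(hence sharing no action type with any component). -/
def inert : Proc := .pre .tau 0 (.const 0)

/-- `P \ ℋ` : `P ⊲⊳_ℋ H̄` where `H̄` is a high level component that does not
cooperate with `P` (it shares no action types with the derivatives of `P`). -/
def restr (P : Proc) : Proc := .coop P Hs inert

/-- The high context `C[_] = (_ ⊲⊳_ℋ Hc)/ℋ` applied to `P`. -/
def hctx (Hc P : Proc) : Proc := .hide (.coop P Hs Hc) Hs

/-- Stochastic Non-Interference: `P\ℋ ≈_l (P ⊲⊳_ℋ H)/ℋ` for every high `H`. -/
def SNI (P : Proc) : Prop :=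
  ∀ Hc, IsHighComp E Hs Hc → lb E (restr Hs P) (hctx Hs Hc P)

/-- Persistent Stochastic Non-Interference: every derivative of `P` satisfies SNI. -/
def PSNI (P : Proc) : Prop := ∀ P' ∈ ds E P, SNI E Hs P'

/-- `q_C(P,P',α)`: the sum of the rates over all transitions
`C[P] --(α,r)--> C'[P']` (with `C'[_]` ranging over high contexts). -/
noncomputable def qC (Hc P : Proc) (α : Act) (P' : Proc) : ℝ≥0∞ :=
  ∑' Hc' : Proc, q E (hctx Hs Hc P) α (hctx Hs Hc' P')

/-- `q_C[P,S,α] = Σ_{P'∈S} q_C(P,P',α)`. -/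
noncomputable def qCTo (Hc P : Proc) (S : Set Proc) (α : Act) : ℝ≥0∞ :=
  ∑' P' : S, qC E Hs Hc P α P'

/-- A lumpable bisimulation on high contexts. -/
def IsLumpBisimHC (R : Proc → Proc → Prop) : Prop :=
  Equivalence R ∧
    ∀ P Q, R P Q → ∀ Hc, IsHighComp E Hs Hc → ∀ α, ∀ S ∈ eqCls R,
      (α ≠ Act.tau ∨ (P ∉ S ∧ Q ∉ S)) →
        qCTo E Hs Hc P S α = qCTo E Hs Hc Q S α

/-- Lumpable bisimilarity on high contexts `≈_l^hc`. -/
def lbhc (P Q : Proc) : Prop := ∃ R, IsLumpBisimHC E Hs R ∧ R P Q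

/-- A lumpable bisimulation up to `ℋ`. -/
def IsLumpBisimUpto (R : Proc → Proc → Prop) : Prop :=
  Equivalence R ∧
    ∀ P Q, R P Q → ∀ α, ∀ S ∈ eqCls R,
      ((α ∉ Hs ∧ α ≠ Act.tau) → qTo E P S α = qTo E Q S α) ∧
      ((α ∈ Hs ∨ α = Act.tau) → P ∉ S → Q ∉ S → qTo E P S α = qTo E Q S α)

/-- Lumpable bisimilarity up to `ℋ`, written `≈_l^ℋ`. -/
def lbUpto (P Q : Proc) : Prop := ∃ R, IsLumpBisimUpto E Hs R ∧ R P Q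

end High

end PEPA

/-!
The derivatives of `(α,r).P` are `(α,r).P` itself and those of `P`, so only SNI of `(α,r).P`
is new. As `α` is not high, both `(α,r).P \ ℋ` and `C[(α,r).P]` have a single transition, of type
`α` and rate `r`, to `P \ ℋ` and `C[P]` respectively, and these are lumpably bisimilar because `P`
satisfies SNI. Identifying the two prefixed states in a lumpable bisimulation relating `P \ ℋ` and
`C[P]` gives again a lumpable bisimulation: its classes are unions of old classes, on which
lumpability persists by additivity of `q[_, S, α]`, and the two prefixed states agree on every such
union since `P \ ℋ` and `C[P]` lie in the same class.
-/

namespace PEPA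

variable {E : ℕ → Proc}

section Lumpability

variable {R : Proc → Proc → Prop}

theorem IsLumpBisim.qTo_eq_of_saturated (hR : IsLumpBisim E R) {S : Set Proc}
    (hS : ∀ ⦃Z W⦄, R Z W → Z ∈ S → W ∈ S) {P Q : Proc} (hPQ : R P Q) {α : Act}
    (hα : α ≠ Act.tau ∨ (P ∉ S ∧ Q ∉ S)) : qTo E P S α = qTo E Q S α := by
  set cls : Proc → Set Proc := fun Z => {W | R Z W}
  have hsplit : ∀ X, qTo E X S α = ∑' c, ∑' Z : cls ⁻¹' {c}, S.indicator (q E X α) Z :=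
    fun X => by rw [qTo, tsum_subtype, ENNReal.tsum_fiberwise]
  rw [hsplit, hsplit]
  refine tsum_congr fun c => ?_
  by_cases hc : ∃ Z₀, cls Z₀ = c
  swap
  · have : cls ⁻¹' {c} = ∅ := Set.eq_empty_of_forall_notMem fun Z hZ => hc ⟨Z, hZ⟩
    simp [this]
  obtain ⟨Z₀, rfl⟩ := hc
  have hfib : cls ⁻¹' {cls Z₀} = cls Z₀ := by
    ext Z
    refine ⟨fun hZ => (hZ : cls Z = cls Z₀) ▸ hR.1.refl Z, fun hZ => ?_⟩
    exact Set.ext fun W => ⟨fun h => hR.1.trans hZ h, fun h => hR.1.trans (hR.1.symm hZ) h⟩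
  rw [hfib]
  by_cases hZ₀ : Z₀ ∈ S
  · have hsub : cls Z₀ ⊆ S := fun Z hZ => hS hZ hZ₀
    have hind : ∀ X, ∀ Z : cls Z₀, S.indicator (q E X α) Z = q E X α Z :=
      fun X Z => Set.indicator_of_mem (hsub Z.2) _
    simp only [hind]
    exact hR.2 P Q hPQ α _ ⟨Z₀, rfl⟩ (hα.imp_right fun h => ⟨fun hP => h.1 (hsub hP),
      fun hQ => h.2 (hsub hQ)⟩)
  · have hind : ∀ X, ∀ Z : cls Z₀, S.indicator (q E X α) Z = 0 :=
      fun X Z => Set.indicator_of_notMem (fun hZ => hZ₀ (hS (hR.1.symm Z.2) hZ)) _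
    simp only [hind]

theorem isLumpBisim_eqvGen {G : Proc → Proc → Prop}
    (hG : ∀ P Q, G P Q → ∀ α, ∀ S ∈ eqCls (Relation.EqvGen G),
      (α ≠ Act.tau ∨ (P ∉ S ∧ Q ∉ S)) → qTo E P S α = qTo E Q S α) :
    IsLumpBisim E (Relation.EqvGen G) := by
  refine ⟨Relation.EqvGen.is_equivalence G, fun P Q hPQ α S hS hside => ?_⟩
  obtain ⟨W, rfl⟩ := hS
  have hout : ∀ X Y, Relation.EqvGen G X Y → X ∉ {V | Relation.EqvGen G W V} →
      Y ∉ {V | Relation.EqvGen G W V} :=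
    fun X Y hXY hX hY => hX (.trans _ _ _ hY (.symm _ _ hXY))
  suffices ∀ X Y, Relation.EqvGen G X Y → α ≠ Act.tau ∨ X ∉ {V | Relation.EqvGen G W V} →
      qTo E X {V | Relation.EqvGen G W V} α = qTo E Y {V | Relation.EqvGen G W V} α from
    this P Q hPQ (hside.imp_right And.left)
  intro X Y hXY
  induction hXY with
  | rel X Y h =>
    exact fun h' => hG X Y h α _ ⟨W, rfl⟩ (h'.imp_right fun hX => ⟨hX, hout _ _ (.rel _ _ h) hX⟩)
  | refl => exact fun _ => rfl
  | symm X Y hXY ih => exact fun h => (ih (h.imp_right (hout _ _ (.symm _ _ hXY)))).symm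
  | trans X Y Z hXY _ ihXY ihYZ => exact fun h => (ihXY h).trans (ihYZ (h.imp_right (hout _ _ hXY)))

theorem IsLumpBisim.eqvGen_identify (hR : IsLumpBisim E R) {a b : Proc}
    (hab : ∀ α S, (∀ ⦃Z W⦄, R Z W → Z ∈ S → W ∈ S) → qTo E a S α = qTo E b S α) :
    IsLumpBisim E (Relation.EqvGen fun Z W => R Z W ∨ (Z = a ∧ W = b)) := by
  set G : Proc → Proc → Prop := fun Z W => R Z W ∨ (Z = a ∧ W = b)
  refine isLumpBisim_eqvGen fun P Q hPQ α S hS hside => ?_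
  obtain ⟨V, rfl⟩ := hS
  have hsat : ∀ ⦃Z W⦄, R Z W → Z ∈ {X | Relation.EqvGen G V X} → W ∈ {X | Relation.EqvGen G V X} :=
    fun Z W hZW hZ => .trans _ _ _ hZ (.rel _ _ (Or.inl hZW))
  rcases hPQ with hPQ | ⟨rfl, rfl⟩
  · exact hR.qTo_eq_of_saturated hsat hPQ hside
  · exact hab α _ hsat

end Lumpability

theorem qTo_of_forall_q_eq_ite {P P₀ : Proc} {α : Act} {r : ℝ≥0∞}
    (h : ∀ β X, q E P β X = if α = β ∧ X = P₀ then r else 0) (S : Set Proc) (β : Act) :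
    qTo E P S β = if α = β ∧ P₀ ∈ S then r else 0 := by
  have hind : S.indicator (q E P β) = fun X => if X = P₀ then (if α = β ∧ P₀ ∈ S then r else 0)
      else 0 := by
    funext X
    by_cases hX : X = P₀
    · subst hX
      by_cases hX : X ∈ S <;> simp [h, hX]
    · simp [h, hX]
  rw [qTo, tsum_subtype, hind, tsum_ite_eq]

theorem lb_of_unique_transitions {a b a' b' : Proc} {α : Act} {r : ℝ≥0∞}
    (ha : ∀ β X, q E a β X = if α = β ∧ X = a' then r else 0)
    (hb : ∀ β X, q E b β X = if α = β ∧ X = b' then r else 0) (h : lb E a' b') : lb E a b := by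
  obtain ⟨R, hR, ha'b'⟩ := h
  refine ⟨_, hR.eqvGen_identify fun β S hS => ?_, .rel _ _ (Or.inr ⟨rfl, rfl⟩)⟩
  have hmem : a' ∈ S ↔ b' ∈ S := ⟨hS ha'b', hS (hR.1.symm ha'b')⟩
  rw [qTo_of_forall_q_eq_ite ha, qTo_of_forall_q_eq_ite hb, hmem]

def SoleStepF (E : ℕ → Proc) (N : ℕ) (P : Proc) (α : Act) (r : ℝ≥0∞) (P₀ : Proc) : Prop :=
  ∀ n β X, qF E n P β X = if N ≤ n ∧ α = β ∧ X = P₀ then r else 0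

section SoleStep

variable {N : ℕ} {P P₀ : Proc} {α : Act} {r : ℝ≥0∞} {L : Set Act}

theorem soleStepF_pre (α : Act) (r : ℝ≥0∞) (P : Proc) : SoleStepF E 1 (.pre α r P) α r P := by
  rintro (_ | n) β X <;> simp [qF]

theorem SoleStepF.coop (h : SoleStepF E N P α r P₀) (hα : α ∉ L) {Q : Proc}
    (hQ : ∀ n β X, β ∉ L → qF E n Q β X = 0) :
    SoleStepF E (N + 1) (.coop P L Q) α r (.coop P₀ L Q) := by
  rintro (_ | n) β X
  · simp [qF]
  rcases X with _ | _ | ⟨P', L', Q'⟩ | _ | _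
  case coop =>
    simp only [qF, Proc.coop.injEq, Nat.add_le_add_iff_right]
    by_cases hL : L' = L
    · subst L'
      by_cases hβ : β ∈ L
      · have hαβ : α ≠ β := fun hαβ => hα (hαβ ▸ hβ)
        simp [hβ, h n β P', hαβ]
      · by_cases hQ' : Q' = Q <;> simp [hβ, fun X => hQ n β X hβ, h n, hQ']
    · simp [hL]
  all_goals simp [qF]

theorem SoleStepF.hide (h : SoleStepF E N P α r P₀) (hα : α ∉ L) :
    SoleStepF E (N + 1) (.hide P L) α r (.hide P₀ L) := by
  rintro (_ | n) β X
  · simp [qF]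
  rcases X with _ | _ | _ | ⟨P', L'⟩ | _
  case hide =>
    simp only [qF, Proc.hide.injEq, Nat.add_le_add_iff_right]
    by_cases hL : L' = L
    · subst L'
      have hsum : ∑' γ : L, qF E n P γ P' = 0 :=
        ENNReal.tsum_eq_zero.2 fun γ => by
          rw [h n]
          exact if_neg fun hγ : N ≤ n ∧ α = γ ∧ P' = P₀ => hα (hγ.2.1 ▸ γ.2)
      by_cases hβτ : β = Act.tau
      · subst hβτ
        simp only [if_true, hsum, add_zero, and_true]
        exact h n _ _
      by_cases hβ : β ∈ L
      · have hαβ : α ≠ β := fun hαβ => hα (hαβ ▸ hβ)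
        simp [hβτ, hβ, hαβ]
      · simp [hβτ, hβ, h n]
    · simp [hL]
  all_goals simp [qF]

theorem SoleStepF.q_eq (h : SoleStepF E N P α r P₀) (β : Act) (X : Proc) :
    q E P β X = if α = β ∧ X = P₀ then r else 0 := by
  refine le_antisymm (iSup_le fun n => ?_) (le_iSup_of_le N ?_) <;> rw [h] <;> split_ifs <;> simp_all

end SoleStep

theorem qF_inert (n : ℕ) (β : Act) (X : Proc) : qF E n inert β X = 0 := by
  rw [inert, soleStepF_pre _ _ _ n β X, ite_self]

theorem qF_eq_zero_of_isHighComp {Hs : Set Act} {H : Proc} (hH : IsHighComp E Hs H) {β : Act}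
    (hβ : β ∉ Hs) (n : ℕ) (X : Proc) : qF E n H β X = 0 := by
  have hq : q E H β X = 0 := by
    by_contra hq
    exact hβ (hH H .refl ⟨X, hq⟩)
  exact ENNReal.iSup_eq_zero.1 hq n

theorem SNI.pre {Hs : Set Act} {α : Act} (hα : α ∉ Hs) (r : ℝ≥0∞) {P : Proc}
    (hP : SNI E Hs P) : SNI E Hs (.pre α r P) := fun Hc hHc =>
  lb_of_unique_transitions
    ((soleStepF_pre α r P).coop hα fun n β X _ => qF_inert n β X).q_eq
    (((soleStepF_pre α r P).coop hα fun n _ X hβ =>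
      qF_eq_zero_of_isHighComp hHc hβ n X).hide hα).q_eq
    (hP Hc hHc)

theorem mem_ds_pre {α : Act} {r : ℝ≥0∞} {P P' : Proc} (h : P' ∈ ds E (.pre α r P)) :
    P' = .pre α r P ∨ P' ∈ ds E P := by
  rcases Relation.ReflTransGen.cases_head h with rfl | ⟨Q, ⟨_, hβ⟩, hQ⟩
  · exact Or.inl rfl
  · have hQP : Q = P := by
      by_contra hne
      rw [(soleStepF_pre α r P).q_eq] at hβ
      exact hβ (if_neg fun h => hne h.2)
    exact Or.inr (hQP ▸ hQ)

end PEPA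

open PEPA

/-- PSNI is compositional w.r.t. low (or silent) prefixes:
if `P ∈ PSNI` then `(α,r).P ∈ PSNI` for all `α ∈ ℒ ∪ {τ}` and every rate `r`. -/
theorem psni_pre (E : ℕ → Proc) (Hs : Set Act) (hτ : Act.tau ∉ Hs) (P : Proc)
    (hP : PSNI E Hs P) :
    ∀ α ∈ Low Hs ∪ {Act.tau}, ∀ r : ℝ≥0∞, PSNI E Hs (.pre α r P) := by
  intro α hα r P' hP'
  have hαHs : α ∉ Hs := by
    rcases hα with hα | rfl
    · exact hα.1
    · exact hτ
  rcases mem_ds_pre hP' with rfl | hP'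
  · exact (hP P .refl).pre hαHs r
  · exact hP P' hP'
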